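/- Let p = 2 and let E = ⊕_j Λ/(f_j) be a finite direct sum of Λ-modules where each f_j is a distinguished polynomial, and set λ = Σ_j deg f_j. If λ = 2 then the cardinality of E/ν₂E is at least 16, and if λ ≥ 3 then the cardinality of E/ν₂E is at least 8. -/

import Mathlib

open DirectSum

/-- A distinguished polynomial over `ℤ₂`: monic, with all non-leading
coefficients divisible by `2`. -/
def IsDistinguished2 (f : Polynomial ℤ_[2]) : Prop :=
  f.Monic ∧ ∀ i < f.natDegree, (2 : ℤ_[2]) ∣ f.coeff i

/-- Shortcut instance (port repair): Lean no longer finds the `AddCommGroup` structure on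
`⨁ j, R ⧸ I j` inside the `HasQuotient` search for `PowerSeries ℤ_[2]`; this is just
Mathlib's own instance, restated. -/
instance instAddCommGroupDirectSumQuotient {ι R : Type*} [CommRing R] (I : ι → Ideal R) :
    AddCommGroup (⨁ j, R ⧸ I j) := inferInstance

/-!
By Weierstrass division, `Λ/(f, ν₂) ≅ ℤ₂[X]/(f, ν₂)` for a distinguished `f`, and `E/ν₂E` surjects
onto `∏ⱼ Λ/(f_j, ν₂)`. It therefore suffices to bound each factor below by `2^k` with
`k = 0, 2, 4, 3` for `deg f = 0, 1, 2, ≥ 3`; these exponents add up to at least `4` when `λ = 2` and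
to at least `3` when `λ ≥ 3`. Each factor surjects onto an explicit finite ring:
`(ℤ/4)[X]/(f)` when `deg f = 1`; `(ℤ/2)[X]/(X³)` when `deg f ≥ 3`, because `f ≡ X^(deg f)` and
`ν₂ ≡ X³` mod `2`; and, writing `f = X² + 2uX + 2w` when `deg f = 2`, either `(ℤ/4)[X]/(f)` if `w`
is odd, or `(ℤ/8)[X]/(f, 2X + 4)` if `w` is even, since then `ν₂ = (X + 2)(X² + 2X + 2)` lies in
`(f, 2X + 4)`.
-/

open Polynomial

universe u v

theorem Cardinal.mk_le_mk_quotient_of_le_ker {R B : Type u} [CommRing R] [Semiring B]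
    {ψ : R →+* B} (hψ : Function.Surjective ψ) {J : Ideal R} (hJ : J ≤ RingHom.ker ψ) :
    Cardinal.mk B ≤ Cardinal.mk (R ⧸ J) :=
  Cardinal.mk_le_of_surjective
    (Ideal.Quotient.lift_surjective_of_surjective J (fun _ ha => hJ ha) hψ)

theorem Cardinal.mk_quotient_le_of_le {R : Type*} [CommRing R] {I J : Ideal R} (h : I ≤ J) :
    Cardinal.mk (R ⧸ J) ≤ Cardinal.mk (R ⧸ I) :=
  Cardinal.mk_le_of_surjective (Ideal.Quotient.factor_surjective h)

theorem Ideal.span_pair_le {R : Type*} [Semiring R] {a b : R} {J : Ideal R} (ha : a ∈ J)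
    (hb : b ∈ J) : Ideal.span {a, b} ≤ J :=
  Ideal.span_le.2 (Set.insert_subset ha (Set.singleton_subset_iff.2 hb))

theorem Polynomial.eval_mul_eq_eval_mul_of_sub_mul_eq_zero {A : Type*} [CommRing A] {t μ z : A}
    (h : (t - μ) * z = 0) (q : A[X]) : q.eval t * z = q.eval μ * z := by
  obtain ⟨r, hr⟩ := sub_dvd_eval_sub t μ q
  linear_combination z * hr + r * h

namespace AdjoinRoot

theorem natCard_map_of_monic {R S : Type*} [CommRing R] [CommRing S] {g : R[X]} (hg : g.Monic)
    (σ : R →+* S) : Nat.card (AdjoinRoot (g.map σ)) = Nat.card S ^ g.natDegree := by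
  rcases subsingleton_or_nontrivial S with hS | hS
  · have : Subsingleton (AdjoinRoot (g.map σ)) := mk_surjective.subsingleton
    simp
  · rw [Nat.card_congr (powerBasis' (hg.map σ)).basis.equivFun.toEquiv, Nat.card_fun,
      Nat.card_eq_fintype_card (α := Fin _), Fintype.card_fin, powerBasis'_dim,
      hg.natDegree_map]

theorem span_singleton_subset_zmultiples {n : ℕ} [NeZero n] {g : (ZMod n)[X]} {z : AdjoinRoot g}
    {μ : ZMod n} (h : (root g - of g μ) * z = 0) :
    (Ideal.span {z} : Set (AdjoinRoot g)) ⊆ AddSubgroup.zmultiples z := by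
  rintro _ hx
  obtain ⟨y, rfl⟩ := Ideal.mem_span_singleton'.1 hx
  induction y using AdjoinRoot.induction_on with | _ p
  have hp : mk g p * z = of g (p.eval μ) * z := by
    rw [← aeval_eq, aeval_def, algebraMap_eq, eval₂_eq_eval_map, ← eval₂_at_apply, ← eval_map,
      eval_mul_eq_eval_mul_of_sub_mul_eq_zero h]
  rw [hp, ← ZMod.natCast_zmod_val (p.eval μ), map_natCast, ← nsmul_eq_mul]
  exact AddSubgroup.nsmul_mem_zmultiples z _

theorem natCard_le_addOrderOf_mul_natCard_quotient {n : ℕ} [NeZero n] {g : (ZMod n)[X]}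
    [Finite (AdjoinRoot g)] {z : AdjoinRoot g} {μ : ZMod n} (h : (root g - of g μ) * z = 0) :
    Nat.card (AdjoinRoot g) ≤ addOrderOf z * Nat.card (AdjoinRoot g ⧸ Ideal.span {z}) := by
  rw [Submodule.card_eq_card_quotient_mul_card (Ideal.span {z}), ← Nat.card_zmultiples]
  exact Nat.mul_le_mul_right _ (Nat.card_mono (Set.toFinite _) (span_singleton_subset_zmultiples h))

end AdjoinRoot

namespace Polynomial.IsDistinguishedAt

variable {A : Type*} [CommRing A] {I : Ideal A} [IsAdicComplete I A] {g : A[X]}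

noncomputable def quotientSpanPairEquiv (H : g.IsDistinguishedAt I) (p : A[X]) :
    A[X] ⧸ Ideal.span {g, p} ≃+*
      PowerSeries A ⧸ Ideal.span {(g : PowerSeries A), (p : PowerSeries A)} :=
  (Ideal.quotEquivOfEq (Ideal.span_insert g {p})).trans <|
    (DoubleQuot.quotQuotEquivQuotSup _ _).symm.trans <|
      (Ideal.quotientEquiv _ _ H.algEquivQuotient.toRingEquiv (by
        simp [Ideal.map_span])).trans <|
        (DoubleQuot.quotQuotEquivQuotSup _ _).trans
          (Ideal.quotEquivOfEq (Ideal.span_insert _ _).symm)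

end Polynomial.IsDistinguishedAt

theorem Cardinal.prod_mk_quotient_sup_le_mk_quotient_smul_top {R : Type u} [CommRing R]
    {ι : Type v} [Fintype ι] (I : ι → Ideal R) (J : Ideal R) :
    Cardinal.prod (fun j => Cardinal.mk (R ⧸ (I j ⊔ J))) ≤
      Cardinal.mk ((⨁ j, R ⧸ I j) ⧸ J • (⊤ : Submodule R (⨁ j, R ⧸ I j))) := by
  set L : (⨁ j, R ⧸ I j) →ₗ[R] ((j : ι) → R ⧸ (I j ⊔ J)) :=
    LinearMap.piMap (fun j => Submodule.factor le_sup_left) ∘ₗ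
      (linearEquivFunOnFintype R ι fun j => R ⧸ I j).toLinearMap
  have hL : Function.Surjective L := by
    intro y
    choose x hx using fun j => Submodule.mkQ_surjective _ (y j)
    refine ⟨(linearEquivFunOnFintype R ι _).symm fun j => Submodule.mkQ _ (x j), funext fun j => ?_⟩
    simp [L, ← hx j]
  have hker : J • ⊤ ≤ LinearMap.ker L := Submodule.smul_le.2 fun r hr x _ => by
    rw [LinearMap.mem_ker, map_smul]
    funext j
    rw [Pi.smul_apply, Algebra.smul_def, Ideal.Quotient.algebraMap_eq,
      Ideal.Quotient.eq_zero_iff_mem.2 (Ideal.mem_sup_right hr), zero_mul, Pi.zero_apply]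
  have hsurj : Function.Surjective (Submodule.liftQ (J • ⊤) L hker) := by
    rw [← LinearMap.range_eq_top, Submodule.range_liftQ, LinearMap.range_eq_top.2 hL]
  rw [← Cardinal.mk_pi]
  exact Cardinal.mk_le_of_surjective hsurj

theorem Cardinal.pow_sum_le_prod {ι : Type v} [Fintype ι] (a : ℕ) (e : ι → ℕ)
    {c : ι → Cardinal.{u}} (h : ∀ j, (a : Cardinal) ^ e j ≤ c j) :
    (a : Cardinal) ^ (∑ j, e j) ≤ Cardinal.prod c :=
  calc (a : Cardinal) ^ (∑ j, e j) = Cardinal.prod fun j => (a : Cardinal) ^ e j := by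
        rw [Cardinal.prod_eq_of_fintype, Finset.prod_pow_eq_pow_sum, ← Nat.cast_pow,
          ← Nat.cast_pow, Cardinal.lift_natCast]
    _ ≤ Cardinal.prod c := Cardinal.prod_le_prod _ _ h

theorem Finset.min_sum_le_sum_min {ι : Type*} (s : Finset ι) (d : ι → ℕ) (n : ℕ) :
    min (∑ j ∈ s, d j) n ≤ ∑ j ∈ s, min (d j) n := by
  induction s using Finset.cons_induction with
  | empty => simp
  | cons a s ha ih => rw [Finset.sum_cons, Finset.sum_cons]; omega

theorem PadicInt.two_dvd_or_two_dvd_sub_one (x : ℤ_[2]) : 2 ∣ x ∨ 2 ∣ x - 1 := by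
  obtain ⟨n, hn, hx⟩ := PadicInt.exists_mem_range x
  rw [PadicInt.maximalIdeal_eq_span_p, Ideal.mem_span_singleton] at hx
  interval_cases n
  · left; simpa using hx
  · right; simpa using hx

noncomputable def nu2 : ℤ_[2][X] := X ^ 3 + 4 * X ^ 2 + 6 * X + 4

theorem coe_nu2 : (nu2 : PowerSeries ℤ_[2]) = ∑ i ∈ Finset.range 4, (1 + PowerSeries.X) ^ i := by
  change coeToPowerSeries.ringHom nu2 = _
  simp only [nu2, map_add, map_mul, map_pow, map_ofNat, coeToPowerSeries.ringHom_apply, coe_X,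
    Finset.sum_range_succ, Finset.sum_range_zero]
  ring

theorem two_pow_pow_natDegree_le_mk_quotient {g : ℤ_[2][X]} (hg : g.Monic) (e : ℕ) :
    ((2 ^ e) ^ g.natDegree : Cardinal) ≤ Cardinal.mk (ℤ_[2][X] ⧸ Ideal.span {g, 2 ^ e}) := by
  set σ := PadicInt.toZModPow (p := 2) e
  set ψ := (AdjoinRoot.mk (g.map σ)).comp (mapRingHom σ)
  have hψ : Function.Surjective ψ :=
    AdjoinRoot.mk_surjective.comp (map_surjective _ (ZMod.ringHom_surjective σ))
  have h2e : (2 : ZMod (2 ^ e)) ^ e = 0 := by exact_mod_cast ZMod.natCast_self (2 ^ e)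
  have hker : Ideal.span {g, 2 ^ e} ≤ RingHom.ker ψ := by
    rw [Ideal.span_le, Set.insert_subset_iff, Set.singleton_subset_iff]
    refine ⟨AdjoinRoot.mk_self, ?_⟩
    rw [SetLike.mem_coe, RingHom.mem_ker, map_pow, map_ofNat,
      ← map_ofNat (AdjoinRoot.of (g.map σ)) 2, ← map_pow, h2e, map_zero]
  have hcard := AdjoinRoot.natCard_map_of_monic hg σ
  rw [Nat.card_zmod] at hcard
  have : Finite (AdjoinRoot (g.map σ)) := Nat.finite_of_card_ne_zero (by rw [hcard]; positivity)
  calc ((2 ^ e) ^ g.natDegree : Cardinal)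
      = Nat.card (AdjoinRoot (g.map σ)) := by rw [hcard]; push_cast; rfl
    _ = Cardinal.mk (AdjoinRoot (g.map σ)) := Nat.cast_card
    _ ≤ _ := Cardinal.mk_le_mk_quotient_of_le_ker hψ hker

theorem sixteen_le_mk_quotient_span_two_mul_X_add_four (u w : ℤ_[2]) :
    (16 : Cardinal) ≤ Cardinal.mk
      (ℤ_[2][X] ⧸ Ideal.span {(X ^ 2 + 2 * C u * X + 4 * C w : ℤ_[2][X]), 2 * X + 4}) := by
  set σ := PadicInt.toZModPow (p := 2) 3
  set f : ℤ_[2][X] := X ^ 2 + 2 * C u * X + 4 * C w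
  have hf : f.Monic := by unfold f; monicity!
  have hfdeg : f.natDegree = 2 := by unfold f; compute_degree!
  set A := AdjoinRoot (f.map σ)
  set t : A := AdjoinRoot.root (f.map σ)
  set z : A := 2 * t + 4
  set ψ := (Ideal.Quotient.mk (Ideal.span {z})).comp ((AdjoinRoot.mk (f.map σ)).comp (mapRingHom σ))
  have hψ : Function.Surjective ψ := Ideal.Quotient.mk_surjective.comp
    (AdjoinRoot.mk_surjective.comp (map_surjective _ (ZMod.ringHom_surjective σ)))
  have hker : Ideal.span {f, 2 * X + 4} ≤ RingHom.ker ψ := by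
    rw [Ideal.span_le, Set.insert_subset_iff, Set.singleton_subset_iff]
    refine ⟨by simp [ψ, AdjoinRoot.mk_self], ?_⟩
    rw [SetLike.mem_coe, RingHom.mem_ker, RingHom.comp_apply, Ideal.Quotient.eq_zero_iff_mem]
    exact Ideal.subset_span (by simp [z, t, map_ofNat])
  -- `t z = 2 (1 - u) z` and `4 z = 0`, so `(z) = ℤ z` has at most `4` elements, while `A` has
  -- `8 ^ 2`.
  have hroot : t ^ 2 + 2 * AdjoinRoot.of _ (σ u) * t + 4 * AdjoinRoot.of _ (σ w) = 0 := by
    simpa [f, t, map_ofNat] using AdjoinRoot.mk_self (f := f.map σ)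
  have h8 : (8 : A) = 0 := by
    rw [← map_ofNat (AdjoinRoot.of (f.map σ)) 8, show (8 : ZMod (2 ^ 3)) = 0 by decide, map_zero]
  have htz : (t - AdjoinRoot.of _ (2 * (1 - σ u))) * z = 0 := by
    simp only [map_mul, map_sub, map_one, map_ofNat, z]
    linear_combination 2 * hroot + (AdjoinRoot.of _ (σ u) - AdjoinRoot.of _ (σ w) - 1) * h8
  have horder : addOrderOf z ≤ 4 :=
    addOrderOf_le_of_nsmul_eq_zero (by norm_num) (by
      rw [nsmul_eq_mul]; push_cast; linear_combination (t + 2) * h8)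
  have hcardA := AdjoinRoot.natCard_map_of_monic hf σ
  rw [Nat.card_zmod, hfdeg] at hcardA
  have : Finite A := Nat.finite_of_card_ne_zero (by rw [hcardA]; positivity)
  have hquot : 16 ≤ Nat.card (A ⧸ Ideal.span {z}) := by
    have := AdjoinRoot.natCard_le_addOrderOf_mul_natCard_quotient htz
    rw [hcardA] at this
    nlinarith
  have : Finite (A ⧸ Ideal.span {z}) := Nat.finite_of_card_ne_zero (by omega)
  calc (16 : Cardinal) ≤ Nat.card (A ⧸ Ideal.span {z}) := by exact_mod_cast hquot
    _ = Cardinal.mk (A ⧸ Ideal.span {z}) := Nat.cast_card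
    _ ≤ _ := Cardinal.mk_le_mk_quotient_of_le_ker hψ hker

def nu2CardExp (d : ℕ) : ℕ := if d ≤ 2 then 2 * d else 3

theorem nu2CardExp_of_le_two {d : ℕ} (h : d ≤ 2) : nu2CardExp d = 2 * d := if_pos h

theorem min_le_nu2CardExp (d : ℕ) : min d 3 ≤ nu2CardExp d := by
  unfold nu2CardExp; split_ifs <;> omega

namespace IsDistinguished2

variable {f : ℤ_[2][X]}

theorem isDistinguishedAt (hf : IsDistinguished2 f) :
    f.IsDistinguishedAt (IsLocalRing.maximalIdeal ℤ_[2]) where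
  monic := hf.1
  mem hn := by
    rw [PadicInt.maximalIdeal_eq_span_p, Ideal.mem_span_singleton]
    exact_mod_cast hf.2 _ hn

theorem exists_eq_X_pow_add_two_mul (hf : IsDistinguished2 f) : ∃ u : ℕ → ℤ_[2],
    f = X ^ f.natDegree + 2 * ∑ i ∈ Finset.range f.natDegree, C (u i) * X ^ i := by
  have hcoeff : ∀ i, ∃ v, i < f.natDegree → f.coeff i = 2 * v := fun i =>
    if hi : i < f.natDegree then (hf.2 i hi).imp fun _ hv _ => hv else ⟨0, fun h => absurd h hi⟩
  choose u hu using hcoeff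
  refine ⟨u, ?_⟩
  conv_lhs => rw [hf.1.as_sum]
  rw [Finset.mul_sum]
  congr 1
  refine Finset.sum_congr rfl fun i hi => ?_
  rw [hu i (Finset.mem_range.1 hi), C_mul, map_ofNat, mul_assoc]

theorem four_le_mk_quotient_span_nu2 (hf : IsDistinguished2 f) (hd : f.natDegree = 1) :
    (4 : Cardinal) ≤ Cardinal.mk (ℤ_[2][X] ⧸ Ideal.span {f, nu2}) := by
  obtain ⟨u, hu⟩ := hf.exists_eq_X_pow_add_two_mul
  simp only [hd, pow_one, Finset.sum_range_one, pow_zero, mul_one] at hu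
  have hnu2 : nu2 ∈ Ideal.span {f, 2 ^ 2} := Ideal.mem_span_pair.2
    ⟨X ^ 2 + (4 - 2 * C (u 0)) * X + (6 - 8 * C (u 0) + 4 * C (u 0) ^ 2),
      1 - 3 * C (u 0) + 4 * C (u 0) ^ 2 - 2 * C (u 0) ^ 3, by rw [hu, nu2]; ring⟩
  calc (4 : Cardinal) = (2 ^ 2) ^ f.natDegree := by rw [hd]; norm_num
    _ ≤ _ := two_pow_pow_natDegree_le_mk_quotient hf.1 2
    _ ≤ _ := Cardinal.mk_quotient_le_of_le (Ideal.span_pair_le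
        (Ideal.subset_span (Set.mem_insert _ _)) hnu2)

theorem sixteen_le_mk_quotient_span_nu2 (hf : IsDistinguished2 f) (hd : f.natDegree = 2) :
    (16 : Cardinal) ≤ Cardinal.mk (ℤ_[2][X] ⧸ Ideal.span {f, nu2}) := by
  obtain ⟨u, hu⟩ := hf.exists_eq_X_pow_add_two_mul
  simp only [hd, Finset.sum_range_succ, Finset.sum_range_zero, pow_zero, pow_one, mul_one,
    zero_add] at hu
  rcases PadicInt.two_dvd_or_two_dvd_sub_one (u 0) with ⟨w, hw⟩ | ⟨v, hv⟩
  · have hf' : f = X ^ 2 + 2 * C (u 1) * X + 4 * C w := by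
      rw [hu, hw, C_mul, map_ofNat]; ring
    have hnu2 : nu2 ∈ Ideal.span {f, 2 * X + 4} := Ideal.mem_span_pair.2
      ⟨X + 2, (1 - C (u 1)) * X + 1 - 2 * C w, by rw [hf', nu2]; ring⟩
    calc (16 : Cardinal) ≤ _ := hf' ▸ sixteen_le_mk_quotient_span_two_mul_X_add_four (u 1) w
      _ ≤ _ := Cardinal.mk_quotient_le_of_le (Ideal.span_pair_le
        (Ideal.subset_span (Set.mem_insert _ _)) hnu2)
  · have hf' : f = X ^ 2 + 2 * C (u 1) * X + 2 * (2 * C v + 1) := by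
      rw [hu, show u 0 = 2 * v + 1 by linear_combination hv, C_add, C_mul, map_ofNat, map_one]
      ring
    have hnu2 : nu2 ∈ Ideal.span {f, 2 ^ 2} := Ideal.mem_span_pair.2
      ⟨X + 4 - 2 * C (u 1), (1 - C v - 2 * C (u 1) + C (u 1) ^ 2) * X - 1 - 4 * C v
        + 2 * C (u 1) * C v + C (u 1), by rw [hf', nu2]; ring⟩
    calc (16 : Cardinal) = (2 ^ 2) ^ f.natDegree := by rw [hd]; norm_num
      _ ≤ _ := two_pow_pow_natDegree_le_mk_quotient hf.1 2
      _ ≤ _ := Cardinal.mk_quotient_le_of_le (Ideal.span_pair_le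
        (Ideal.subset_span (Set.mem_insert _ _)) hnu2)

theorem eight_le_mk_quotient_span_nu2 (hf : IsDistinguished2 f) (hd : 3 ≤ f.natDegree) :
    (8 : Cardinal) ≤ Cardinal.mk (ℤ_[2][X] ⧸ Ideal.span {f, nu2}) := by
  obtain ⟨u, hu⟩ := hf.exists_eq_X_pow_add_two_mul
  have hf3 : f ∈ Ideal.span {X ^ 3, 2 ^ 1} := Ideal.mem_span_pair.2
    ⟨X ^ (f.natDegree - 3), ∑ i ∈ Finset.range f.natDegree, C (u i) * X ^ i, by
      rw [← pow_add, Nat.sub_add_cancel hd, pow_one, mul_comm, ← hu]⟩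
  have hnu2 : nu2 ∈ Ideal.span {X ^ 3, 2 ^ 1} :=
    Ideal.mem_span_pair.2 ⟨1, 2 * X ^ 2 + 3 * X + 2, by rw [nu2]; ring⟩
  calc (8 : Cardinal) = (2 ^ 1) ^ (X ^ 3 : ℤ_[2][X]).natDegree := by
        rw [natDegree_X_pow]; norm_num
    _ ≤ _ := two_pow_pow_natDegree_le_mk_quotient (monic_X_pow 3) 1
    _ ≤ _ := Cardinal.mk_quotient_le_of_le (Ideal.span_pair_le hf3 hnu2)

theorem two_pow_nu2CardExp_le_mk_quotient (hf : IsDistinguished2 f) :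
    (2 ^ nu2CardExp f.natDegree : Cardinal) ≤
      Cardinal.mk (PowerSeries ℤ_[2] ⧸ Ideal.span {(f : PowerSeries ℤ_[2]),
        ∑ i ∈ Finset.range 4, (1 + PowerSeries.X) ^ i}) := by
  rw [← coe_nu2, ← Cardinal.mk_congr (hf.isDistinguishedAt.quotientSpanPairEquiv nu2).toEquiv]
  obtain hd | hd | hd | hd : f.natDegree = 0 ∨ f.natDegree = 1 ∨ f.natDegree = 2 ∨
      3 ≤ f.natDegree := by omega
  · simpa [nu2CardExp, hd] using Cardinal.one_le_iff_ne_zero.2 (Cardinal.mk_ne_zero _)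
  · convert hf.four_le_mk_quotient_span_nu2 hd using 1
    norm_num [nu2CardExp, hd]
  · convert hf.sixteen_le_mk_quotient_span_nu2 hd using 1
    norm_num [nu2CardExp, hd]
  · convert hf.eight_le_mk_quotient_span_nu2 hd using 1
    norm_num [nu2CardExp, show ¬ f.natDegree ≤ 2 by omega]

end IsDistinguished2

theorem card_quotient_nu_two_ge_two_adic_general
    (ι : Type*) [Fintype ι]
    (f : ι → Polynomial ℤ_[2]) (hf : ∀ j, IsDistinguished2 (f j))
    (lam : ℕ) (hlam : lam = ∑ j, (f j).natDegree) :
    (lam = 2 →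
      (16 : Cardinal) ≤
        Cardinal.mk
          ((⨁ j, (PowerSeries ℤ_[2] ⧸ Ideal.span {((f j : Polynomial ℤ_[2]) : PowerSeries ℤ_[2])})) ⧸
            (Ideal.span {(∑ i ∈ Finset.range 4, (1 + PowerSeries.X) ^ i : PowerSeries ℤ_[2])} •
              (⊤ : Submodule (PowerSeries ℤ_[2])
                (⨁ j, (PowerSeries ℤ_[2] ⧸
                  Ideal.span {((f j : Polynomial ℤ_[2]) : PowerSeries ℤ_[2])})))))) ∧
    (3 ≤ lam →
      (8 : Cardinal) ≤
        Cardinal.mk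
          ((⨁ j, (PowerSeries ℤ_[2] ⧸ Ideal.span {((f j : Polynomial ℤ_[2]) : PowerSeries ℤ_[2])})) ⧸
            (Ideal.span {(∑ i ∈ Finset.range 4, (1 + PowerSeries.X) ^ i : PowerSeries ℤ_[2])} •
              (⊤ : Submodule (PowerSeries ℤ_[2])
                (⨁ j, (PowerSeries ℤ_[2] ⧸
                  Ideal.span {((f j : Polynomial ℤ_[2]) : PowerSeries ℤ_[2])})))))) := by
  have key : ∀ K ≤ ∑ j, nu2CardExp (f j).natDegree, ((2 ^ K : ℕ) : Cardinal) ≤ _ := fun K hK =>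
    calc ((2 ^ K : ℕ) : Cardinal) ≤ (2 : ℕ) ^ ∑ j, nu2CardExp (f j).natDegree := by
          exact_mod_cast Nat.pow_le_pow_right two_pos hK
      _ ≤ _ := Cardinal.pow_sum_le_prod 2 _ fun j => by
          exact_mod_cast (hf j).two_pow_nu2CardExp_le_mk_quotient
      _ ≤ _ := by
          simpa only [Ideal.span_insert] using
            Cardinal.prod_mk_quotient_sup_le_mk_quotient_smul_top _ _
  refine ⟨fun h2 => ?_, fun h3 => ?_⟩
  · have hle : ∀ j, (f j).natDegree ≤ 2 := fun j => by
      have := Finset.single_le_sum (fun j _ => Nat.zero_le ((f j).natDegree)) (Finset.mem_univ j)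
      omega
    have := key 4 (by
      rw [Finset.sum_congr rfl fun j _ => nu2CardExp_of_le_two (hle j), ← Finset.mul_sum]; omega)
    exact_mod_cast this
  · have := key 3 <| calc 3 = min (∑ j, (f j).natDegree) 3 := by omega
      _ ≤ ∑ j, min (f j).natDegree 3 := Finset.min_sum_le_sum_min _ _ _
      _ ≤ _ := Finset.sum_le_sum fun j _ => min_le_nu2CardExp _
    exact_mod_cast this

/-- For an elementary `Λ = ℤ₂[[T]]`-module `E = ⊕ Λ/(f_j)` with each `f_j`
distinguished and `λ = Σ deg f_j`, the quotient `E/ν₂E`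
(where `ν₂ = ((1+T)⁴ - 1)/T = Σ_{i<4} (1+T)^i`) has cardinality at least `16`
if `λ = 2`, and at least `8` if `λ ≥ 3`. -/
theorem card_quotient_nu_two_ge_two_adic
    (ι : Type*) [Fintype ι] [DecidableEq ι]
    (f : ι → Polynomial ℤ_[2]) (hf : ∀ j, IsDistinguished2 (f j))
    (lam : ℕ) (hlam : lam = ∑ j, (f j).natDegree) :
    (lam = 2 →
      (16 : Cardinal) ≤
        Cardinal.mk
          ((⨁ j, (PowerSeries ℤ_[2] ⧸ Ideal.span {((f j : Polynomial ℤ_[2]) : PowerSeries ℤ_[2])})) ⧸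
            (Ideal.span {(∑ i ∈ Finset.range 4, (1 + PowerSeries.X) ^ i : PowerSeries ℤ_[2])} •
              (⊤ : Submodule (PowerSeries ℤ_[2])
                (⨁ j, (PowerSeries ℤ_[2] ⧸
                  Ideal.span {((f j : Polynomial ℤ_[2]) : PowerSeries ℤ_[2])})))))) ∧
    (3 ≤ lam →
      (8 : Cardinal) ≤
        Cardinal.mk
          ((⨁ j, (PowerSeries ℤ_[2] ⧸ Ideal.span {((f j : Polynomial ℤ_[2]) : PowerSeries ℤ_[2])})) ⧸
            (Ideal.span {(∑ i ∈ Finset.range 4, (1 + PowerSeries.X) ^ i : PowerSeries ℤ_[2])} •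
              (⊤ : Submodule (PowerSeries ℤ_[2])
                (⨁ j, (PowerSeries ℤ_[2] ⧸
                  Ideal.span {((f j : Polynomial ℤ_[2]) : PowerSeries ℤ_[2])})))))) :=
  card_quotient_nu_two_ge_two_adic_general ι f hf lam hlam
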